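/- Let h(x) = (e^x − 1 − x)/x² (extended to an entire function with h(0) = 1/2). Then |h(x)| ≤ e^{|x|} for all complex x, and for any bounded measurable f, g on ℝ and all x, |e^{f(x)} − e^{g(x)} − f(x) + g(x)| ≤ e^{1 + ‖f‖_∞ + ‖g‖_∞}(1 + ‖f‖_∞ + ‖g‖_∞) · (|f(x)g(x)(f(x)−g(x))| + |g²(x) − f²(x)|). -/

import Mathlib

open NormedSpace in
lemma exp_sub_sum_bound (n : ℕ) (x : ℂ) :
    ‖Complex.exp x - ∑ i ∈ Finset.range n, x ^ i / (Nat.factorial i : ℂ)‖ ≤ ‖x‖ ^ n * Real.exp ‖x‖ := by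
  have hs : Summable (fun k : ℕ => x ^ k / (Nat.factorial k : ℂ)) := expSeries_div_summable x
  have hexp : Complex.exp x = ∑' k : ℕ, x ^ k / Nat.factorial k := by
    rw [Complex.exp_eq_exp_ℂ, exp_eq_tsum_div]
  have key : Complex.exp x - ∑ i ∈ Finset.range n, x ^ i / (Nat.factorial i : ℂ)
      = ∑' k : ℕ, x ^ (k + n) / Nat.factorial (k + n) := by
    rw [hexp, ← Summable.sum_add_tsum_nat_add n hs]
    ring
  rw [key]
  have hsr : Summable (fun k : ℕ => ‖x‖ ^ k / (Nat.factorial k : ℝ)) := expSeries_div_summable ‖x‖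
  have hsr' : Summable (fun k : ℕ => ‖x‖ ^ n * (‖x‖ ^ k / (Nat.factorial k : ℝ))) := hsr.mul_left _
  have hterm : ∀ k : ℕ, ‖x ^ (k + n) / (Nat.factorial (k + n) : ℂ)‖ ≤ ‖x‖ ^ n * (‖x‖ ^ k / Nat.factorial k) := by
    intro k
    rw [norm_div, norm_pow, Complex.norm_natCast]
    have h1 : (0:ℝ) < Nat.factorial k := by exact_mod_cast Nat.factorial_pos k
    have h2 : (Nat.factorial k : ℝ) ≤ Nat.factorial (k + n) := by
      exact_mod_cast Nat.factorial_le (Nat.le_add_right k n)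
    calc ‖x‖ ^ (k + n) / (Nat.factorial (k + n) : ℝ)
        ≤ ‖x‖ ^ (k + n) / (Nat.factorial k : ℝ) := by gcongr
      _ = ‖x‖ ^ n * (‖x‖ ^ k / Nat.factorial k) := by rw [pow_add]; ring
  calc ‖∑' k : ℕ, x ^ (k + n) / (Nat.factorial (k + n) : ℂ)‖
      ≤ ∑' k : ℕ, ‖x‖ ^ n * (‖x‖ ^ k / Nat.factorial k) := by
        refine tsum_of_norm_bounded hsr'.hasSum hterm
    _ = ‖x‖ ^ n * Real.exp ‖x‖ := by
        rw [tsum_mul_left, Real.exp_eq_exp_ℝ, exp_eq_tsum_div]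


lemma exp_m_norm (m : ℂ) : ‖Complex.exp m‖ ≤ Real.exp ‖m‖ := by
  rw [Complex.norm_exp]
  exact Real.exp_le_exp.2 (Complex.re_le_norm m)

lemma sum_range_three (d : ℂ) :
    ∑ i ∈ Finset.range 3, d ^ i / (Nat.factorial i : ℂ) = 1 + d + d ^ 2 / 2 := by
  simp [Finset.sum_range_succ, Nat.factorial]
  try norm_num
  try ring

lemma E3_bound (d : ℂ) : ‖Complex.exp d - (1 + d + d ^ 2 / 2)‖ ≤ ‖d‖ ^ 3 * Real.exp ‖d‖ := by
  have := exp_sub_sum_bound 3 d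
  rwa [sum_range_three] at this

lemma E1_bound (m : ℂ) : ‖Complex.exp m - 1‖ ≤ ‖m‖ * Real.exp ‖m‖ := by
  have := exp_sub_sum_bound 1 m
  simp [Finset.sum_range_succ] at this
  simpa using this

lemma key_est (Mf Mg : ℝ) (a b : ℂ) (hMf : 0 ≤ Mf) (hMg : 0 ≤ Mg)
    (ha : ‖a‖ ≤ Mf) (hb : ‖b‖ ≤ Mg) :
    ‖Complex.exp a - Complex.exp b - a + b‖ ≤
      Real.exp (1 + Mf + Mg) * (1 + Mf + Mg) *
        (‖a * b * (a - b)‖ + ‖b ^ 2 - a ^ 2‖) := by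
  set M : ℝ := 1 + Mf + Mg with hM
  set m : ℂ := (a + b) / 2 with hmdef
  set d : ℂ := (a - b) / 2 with hddef
  have hab : a = m + d := by rw [hmdef, hddef]; ring
  have hbb : b = m + -d := by rw [hmdef, hddef]; ring
  have hμ : ‖m‖ ≤ (Mf + Mg) / 2 := by
    rw [hmdef, norm_div]
    simp only [Complex.norm_ofNat]
    calc ‖a + b‖ / 2 ≤ (‖a‖ + ‖b‖) / 2 := by gcongr; exact norm_add_le a b
      _ ≤ (Mf + Mg) / 2 := by gcongr
  have hδ : ‖d‖ ≤ (Mf + Mg) / 2 := by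
    rw [hddef, norm_div]
    simp only [Complex.norm_ofNat]
    calc ‖a - b‖ / 2 ≤ (‖a‖ + ‖b‖) / 2 := by gcongr; exact norm_sub_le a b
      _ ≤ (Mf + Mg) / 2 := by gcongr
  have hid : Complex.exp a - Complex.exp b - a + b
      = Complex.exp m * ((Complex.exp d - (1 + d + d ^ 2 / 2))
          - (Complex.exp (-d) - (1 + -d + (-d) ^ 2 / 2)))
        + 2 * d * (Complex.exp m - 1) := by
    have ea : Complex.exp a = Complex.exp m * Complex.exp d := by
      rw [hab, Complex.exp_add]
    have eb : Complex.exp b = Complex.exp m * Complex.exp (-d) := by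
      rw [hbb, Complex.exp_add]
    rw [ea, eb, hab, hbb]; ring
  have hA : ‖a * b * (a - b)‖ = 2 * ‖d * (m ^ 2 - d ^ 2)‖ := by
    rw [show a * b * (a - b) = 2 * (d * (m ^ 2 - d ^ 2)) by rw [hab, hbb]; ring,
      norm_mul, Complex.norm_ofNat]
  have hB : ‖b ^ 2 - a ^ 2‖ = 4 * (‖m‖ * ‖d‖) := by
    rw [show b ^ 2 - a ^ 2 = (-4) * (m * d) by rw [hab, hbb]; ring, norm_mul, norm_mul]
    norm_num
  have hd3 : ‖d‖ ^ 3 ≤ ‖d * (m ^ 2 - d ^ 2)‖ + ‖m‖ * (‖m‖ * ‖d‖) := by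
    calc ‖d‖ ^ 3 = ‖d ^ 3‖ := (norm_pow d 3).symm
      _ = ‖d * (m ^ 2 - d ^ 2) * (-1) + m * (m * d)‖ := by ring_nf
      _ ≤ ‖d * (m ^ 2 - d ^ 2) * (-1)‖ + ‖m * (m * d)‖ := norm_add_le _ _
      _ = ‖d * (m ^ 2 - d ^ 2)‖ + ‖m‖ * (‖m‖ * ‖d‖) := by
          rw [norm_mul, norm_mul, norm_mul]; simp
  have hem : ‖Complex.exp m‖ ≤ Real.exp ‖m‖ := exp_m_norm m
  have h3 := E3_bound d
  have h3' := E3_bound (-d)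
  rw [norm_neg] at h3'
  have h1 := E1_bound m
  set A := ‖d * (m ^ 2 - d ^ 2)‖ with hAdef
  set μ := ‖m‖ with hμdef
  set δ := ‖d‖ with hδdef
  have hA0 : 0 ≤ A := norm_nonneg _
  have hμ0 : 0 ≤ μ := norm_nonneg _
  have hδ0 : 0 ≤ δ := norm_nonneg _
  have hM1 : 1 ≤ M := by rw [hM]; linarith
  have hμM : μ ≤ M := by rw [hM]; linarith
  have hexp1 : Real.exp μ * Real.exp δ ≤ Real.exp M := by
    rw [← Real.exp_add]
    exact Real.exp_le_exp.2 (by rw [hM]; linarith)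
  have hexp2 : Real.exp μ ≤ Real.exp M := Real.exp_le_exp.2 (by rw [hM]; linarith)
  have hEM : (0:ℝ) < Real.exp M := Real.exp_pos M
  have hprod : μ * (Real.exp μ * Real.exp δ) ≤ M * Real.exp M :=
    mul_le_mul hμM hexp1 (by positivity) (by linarith)
  calc ‖Complex.exp a - Complex.exp b - a + b‖
      = ‖Complex.exp m * ((Complex.exp d - (1 + d + d ^ 2 / 2))
          - (Complex.exp (-d) - (1 + -d + (-d) ^ 2 / 2)))
        + 2 * d * (Complex.exp m - 1)‖ := by rw [hid]
    _ ≤ ‖Complex.exp m‖ * (‖Complex.exp d - (1 + d + d ^ 2 / 2)‖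
          + ‖Complex.exp (-d) - (1 + -d + (-d) ^ 2 / 2)‖)
        + 2 * δ * ‖Complex.exp m - 1‖ := by
        refine (norm_add_le _ _).trans ?_
        gcongr
        · rw [norm_mul]
          gcongr
          exact norm_sub_le _ _
        · rw [norm_mul, norm_mul, Complex.norm_ofNat]
    _ ≤ Real.exp μ * (δ ^ 3 * Real.exp δ + δ ^ 3 * Real.exp δ)
        + 2 * δ * (μ * Real.exp μ) := by gcongr
    _ ≤ Real.exp M * M * (2 * A + 4 * (μ * δ)) := by
        nlinarith [mul_nonneg (sub_nonneg.2 hd3) (mul_pos (Real.exp_pos μ) (Real.exp_pos δ)).le,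
          mul_nonneg (sub_nonneg.2 hexp1) hA0,
          mul_nonneg (sub_nonneg.2 hprod) (mul_nonneg hμ0 hδ0),
          mul_nonneg (sub_nonneg.2 hexp2) (mul_nonneg hμ0 hδ0),
          mul_nonneg (mul_nonneg (sub_nonneg.2 hM1) hEM.le) hA0,
          mul_nonneg (mul_nonneg (sub_nonneg.2 hM1) hEM.le) (mul_nonneg hμ0 hδ0)]
    _ = Real.exp M * M * (‖a * b * (a - b)‖ + ‖b ^ 2 - a ^ 2‖) := by rw [hA, hB]

/-- The entire function `h(x) = (e^x - 1 - x)/x²`, `h(0) = 1/2`. -/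
noncomputable def hEnt (x : ℂ) : ℂ :=
  if x = 0 then 1 / 2 else (Complex.exp x - 1 - x) / x ^ 2

/-- `|h(x)| ≤ e^{|x|}`, and the contour-integral estimate for
`e^f - e^g - f + g` for bounded `f, g`. -/
theorem hEnt_bound_and_exp_diff_estimate :
    (∀ x : ℂ, ‖hEnt x‖ ≤ Real.exp ‖x‖) ∧
    ∀ (f g : ℝ → ℂ) (Mf Mg : ℝ), (∀ x : ℝ, ‖f x‖ ≤ Mf) → (∀ x : ℝ, ‖g x‖ ≤ Mg) →
      ∀ x : ℝ,
        ‖Complex.exp (f x) - Complex.exp (g x) - f x + g x‖ ≤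
          Real.exp (1 + Mf + Mg) * (1 + Mf + Mg) *
            (‖f x * g x * (f x - g x)‖ + ‖g x ^ 2 - f x ^ 2‖) := by
  constructor
  · intro x
    by_cases hx : x = 0
    · subst hx
      rw [hEnt, if_pos rfl]
      simp only [norm_zero, Real.exp_zero]
      rw [show ((1:ℂ)/2) = ((1/2 : ℝ) : ℂ) by norm_num, Complex.norm_real]
      norm_num
    · rw [hEnt, if_neg hx, norm_div, norm_pow]
      have h2 := exp_sub_sum_bound 2 x
      have hsum : ∑ i ∈ Finset.range 2, x ^ i / (Nat.factorial i : ℂ) = 1 + x := by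
        simp [Finset.sum_range_succ]
      rw [hsum] at h2
      have hxx : (0:ℝ) < ‖x‖ := norm_pos_iff.2 hx
      have hx0 : (0:ℝ) < ‖x‖ ^ 2 := by positivity
      rw [div_le_iff₀ hx0]
      calc ‖Complex.exp x - 1 - x‖ = ‖Complex.exp x - (1 + x)‖ := by ring_nf
        _ ≤ ‖x‖ ^ 2 * Real.exp ‖x‖ := h2
        _ = Real.exp ‖x‖ * ‖x‖ ^ 2 := by ring
  · intro f g Mf Mg hf hg x
    exact key_est Mf Mg (f x) (g x) ((norm_nonneg _).trans (hf x))
      ((norm_nonneg _).trans (hg x)) (hf x) (hg x)
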